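/- arXiv:2206.01874 — 6 statements merged into one kernel-verified Lean document; each statement's English description precedes it below -/
import Mathlib

section
/- Every connected finite simple graph with 2K vertices (K ≥ 1) admits a partition of its vertex set into K pairs such that the two vertices of each pair are at graph distance at most 2 from each other. -/
/-!
Root the graph at a vertex `r` and let `u` be a vertex farthest from `r`. If another farthest
vertex `w` lies within distance 2 of `u`, pair `u` with `w`; otherwise pair `u` with any
neighbour `p`. In both cases no shortest path from `r` to a remaining vertex passes through the
removed pair (for `p`: the vertex after `p` on such a path would be a farthest vertex within
distance 2 of `u`), so the remaining vertices induce a preconnected graph of even order and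
induction applies.
-/

namespace SimpleGraph

variable {V W : Type*} {G : SimpleGraph V} {G' : SimpleGraph W}

theorem edist_map_le (φ : G →g G') (u v : V) : G'.edist (φ u) (φ v) ≤ G.edist u v := by
  by_cases h : G.Reachable u v
  · obtain ⟨p, hp⟩ := h.exists_walk_length_eq_edist
    rw [← hp, ← p.length_map φ]
    exact edist_le _
  · rw [edist_eq_top_of_not_reachable h]
    exact le_top

theorem Preconnected.induce_image_val {s : Set V} {t : Set s}
    (h : ((G.induce s).induce t).Preconnected) : (G.induce (Subtype.val '' t)).Preconnected :=
  h.map (induceHom (Embedding.induce s).toHom (Set.mapsTo_image _ _)) <| by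
    rintro ⟨_, x, hx, rfl⟩
    exact ⟨⟨x, hx⟩, rfl⟩

theorem induce_compl_preconnected_of_forall_walk {S : Set V} (r : V)
    (h : ∀ x ∉ S, ∃ q : G.Walk r x, ∀ y ∈ q.support, y ∉ S) : (G.induce Sᶜ).Preconnected := by
  have hreach : ∀ x (hx : x ∉ S) (hr : r ∉ S),
      (G.induce Sᶜ).Reachable ⟨r, hr⟩ ⟨x, hx⟩ := fun x hx hr => by
    obtain ⟨q, hq⟩ := h x hx
    exact (q.induce Sᶜ hq).reachable
  rintro ⟨a, ha⟩ ⟨b, hb⟩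
  obtain ⟨q, hq⟩ := h a ha
  have hr : r ∉ S := hq r q.start_mem_support
  exact (hreach a ha hr).symm.trans (hreach b hb hr)

theorem Walk.dist_add_dist_le_length [DecidableEq V] {r x y : V} (q : G.Walk r x)
    (hy : y ∈ q.support) : G.dist r y + G.dist y x ≤ q.length := by
  rw [← q.take_spec hy, Walk.length_append]
  exact add_le_add (dist_le _) (dist_le _)

theorem Connected.eq_of_mem_support_of_forall_dist_le (hG : G.Connected) {r x y : V}
    (hy : ∀ z, G.dist r z ≤ G.dist r y) (q : G.Walk r x) (hq : q.length = G.dist r x)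
    (hyq : y ∈ q.support) : y = x := by
  classical
  have := q.dist_add_dist_le_length hyq
  have := hy x
  exact hG.dist_eq_zero_iff.mp (by omega)

theorem Connected.exists_edist_le_two_preconnected_induce_compl_pair [Finite V] [Nontrivial V]
    (hG : G.Connected) :
    ∃ u w, u ≠ w ∧ G.edist u w ≤ 2 ∧ (G.induce {u, w}ᶜ).Preconnected := by
  classical
  obtain ⟨r⟩ := hG.nonempty
  obtain ⟨u, hu⟩ := Finite.exists_max (G.dist r)
  by_cases hfar : ∃ w ≠ u, G.dist r w = G.dist r u ∧ G.dist u w ≤ 2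
  · obtain ⟨w, hwu, hw, huw⟩ := hfar
    refine ⟨u, w, hwu.symm, ?_, induce_compl_preconnected_of_forall_walk r fun x hx => ?_⟩
    · rw [← (hG.preconnected u w).coe_dist_eq_edist]
      exact_mod_cast huw
    obtain ⟨q, hq⟩ := hG.exists_walk_length_eq_dist r x
    refine ⟨q, fun y hy hyS => hx ?_⟩
    obtain rfl | rfl := hyS
    · rw [← hG.eq_of_mem_support_of_forall_dist_le hu q hq hy]; exact Set.mem_insert _ _
    · rw [← hG.eq_of_mem_support_of_forall_dist_le (hw ▸ hu) q hq hy]; simp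
  push Not at hfar
  obtain ⟨p, hup⟩ := hG.preconnected.exists_adj_of_nontrivial u
  refine ⟨u, p, hup.ne, ?_, induce_compl_preconnected_of_forall_walk r fun x hx => ?_⟩
  · rw [edist_eq_one_iff_adj.mpr hup]; norm_num
  obtain ⟨q, hq⟩ := hG.exists_walk_length_eq_dist r x
  refine ⟨q, fun y hy hyS => hx ?_⟩
  obtain rfl | rfl := hyS
  · rw [← hG.eq_of_mem_support_of_forall_dist_le hu q hq hy]; exact Set.mem_insert _ _
  exfalso
  have hpx : G.dist y x ≠ 0 := fun h => hx (by simp [hG.dist_eq_zero_iff.mp h])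
  have hpath := q.dist_add_dist_le_length hy
  have hru : G.dist r u ≤ G.dist r y + 1 :=
    dist_eq_one_iff_adj.mpr hup.symm ▸ hG.dist_triangle
  have hux : G.dist u x ≤ 1 + G.dist y x := dist_eq_one_iff_adj.mpr hup ▸ hG.dist_triangle
  have hxmax := hu x
  have := hfar x (by rintro rfl; simp at hx) (by omega)
  omega

def IsDistPairingOn (G : SimpleGraph V) (n : ℕ∞) (s : Set V) (f : V → V) : Prop :=
  ∀ v ∈ s, f v ∈ s ∧ f (f v) = v ∧ f v ≠ v ∧ G.edist v (f v) ≤ n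

variable {n : ℕ∞} {s t : Set V} {f g : V → V}

theorem isDistPairingOn_empty : G.IsDistPairingOn n ∅ f := fun _ hv => hv.elim

theorem isDistPairingOn_pair [DecidableEq V] {u w : V} (huw : u ≠ w) (h : G.edist u w ≤ n) :
    G.IsDistPairingOn n {u, w} (Equiv.swap u w) := by
  rintro v (rfl | rfl)
  · simp [huw.symm, h]
  · simp [huw, edist_comm, h]

theorem IsDistPairingOn.union [DecidablePred (· ∈ s)] (hs : G.IsDistPairingOn n s f)
    (ht : G.IsDistPairingOn n t g) (hst : Disjoint s t) :
    G.IsDistPairingOn n (s ∪ t) (s.piecewise f g) := by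
  rintro v (hv | hv)
  · obtain ⟨hfv, hffv, hne, hd⟩ := hs v hv
    rw [Set.piecewise_eq_of_mem _ _ _ hv, Set.piecewise_eq_of_mem _ _ _ hfv]
    exact ⟨Or.inl hfv, hffv, hne, hd⟩
  · obtain ⟨hgv, hggv, hne, hd⟩ := ht v hv
    have hvs : v ∉ s := hst.notMem_of_mem_right hv
    have hgvs : g v ∉ s := hst.notMem_of_mem_right hgv
    rw [Set.piecewise_eq_of_notMem _ _ _ hvs, Set.piecewise_eq_of_notMem _ _ _ hgvs]
    exact ⟨Or.inr hgv, hggv, hne, hd⟩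

theorem exists_isDistPairingOn_two [Finite V] (s : Set V) (heven : Even s.ncard)
    (hs : (G.induce s).Preconnected) : ∃ f, G.IsDistPairingOn 2 s f := by
  classical
  induction h : s.ncard using Nat.strong_induction_on generalizing s with
  | _ n ih =>
  obtain rfl | hne := s.eq_empty_or_nonempty
  · exact ⟨id, isDistPairingOn_empty⟩
  have hn : 2 ≤ n := by
    obtain ⟨k, hk⟩ := heven
    have := (Set.ncard_pos s.toFinite).mpr hne
    omega
  have : Nontrivial s := Set.nontrivial_coe_sort.mpr
    (Set.one_lt_ncard_iff_nontrivial.mp (by omega))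
  have : Nonempty s := hne.to_subtype
  obtain ⟨u, w, huw, hdist, hrest⟩ :=
    (Connected.mk hs).exists_edist_le_two_preconnected_induce_compl_pair
  have huw' : (u : V) ≠ w := Subtype.coe_ne_coe.mpr huw
  have hsub : {(u : V), (w : V)} ⊆ s := by simp [Set.insert_subset_iff]
  have hrest' : Subtype.val '' ({u, w}ᶜ : Set s) = s \ {(u : V), (w : V)} := by
    ext x; simp [eq_comm]
  have hcard : (s \ {(u : V), (w : V)}).ncard = n - 2 := by
    rw [Set.ncard_sdiff hsub, Set.ncard_pair huw', h]
  obtain ⟨f, hf⟩ := ih (n - 2) (by omega) _ (by rw [hcard, ← h]; exact heven.tsub even_two)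
    (hrest' ▸ hrest.induce_image_val) hcard
  refine ⟨_, Set.union_sdiff_cancel hsub ▸ (isDistPairingOn_pair huw' ?_).union hf
    Set.disjoint_sdiff_right⟩
  exact (edist_map_le (Embedding.induce s).toHom u w).trans hdist

end SimpleGraph

theorem perfect_dist_le_two_pairing_even_general {V : Type} [Fintype V] (G : SimpleGraph V)
    (K : ℕ) (hcard : Fintype.card V = 2 * K) (hc : G.Connected) :
    ∃ f : V → V, Function.Involutive f ∧ ∀ v, f v ≠ v ∧ G.dist v (f v) ≤ 2 := by
  have heven : Even (Set.univ : Set V).ncard := by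
    rw [Set.ncard_univ, Nat.card_eq_fintype_card, hcard]
    exact even_two_mul K
  obtain ⟨f, hf⟩ := SimpleGraph.exists_isDistPairingOn_two Set.univ heven
    ((SimpleGraph.induceUnivIso G).connected_iff.mpr hc).preconnected
  refine ⟨f, fun v => (hf v trivial).2.1, fun v => ⟨(hf v trivial).2.2.1, ?_⟩⟩
  exact ENat.toNat_le_of_le_natCast (hf v trivial).2.2.2

/-- Every connected graph with `2K` vertices (`K ≥ 1`) admits a partition of its vertex set
into `K` pairs, each pair at graph distance at most 2 (encoded by a fixed-point-free
involution). -/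
theorem perfect_dist_le_two_pairing_even {V : Type} [Fintype V] (G : SimpleGraph V)
    (K : ℕ) (hK : 1 ≤ K) (hcard : Fintype.card V = 2 * K) (hc : G.Connected) :
    ∃ f : V → V, Function.Involutive f ∧ ∀ v, f v ≠ v ∧ G.dist v (f v) ≤ 2 :=
  perfect_dist_le_two_pairing_even_general G K hcard hc
end

section
/- Every connected finite simple graph with 2K+1 vertices (K ≥ 1) contains K disjoint pairs of distinct vertices (covering all but one vertex) such that each pair is at graph distance at most 2. -/
/-!
Remove two vertices at distance at most 2 whose deletion leaves the graph connected, and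
induct. To find them, fix a root `r` and a vertex `v` farthest from it. If another farthest
vertex `w` lies within distance 2 of `v`, remove `v` and `w`; otherwise remove `v` and a
neighbour `u` of `v` one step closer to `r`. Either way no geodesic from `r` to a remaining
vertex meets the removed pair, so the remaining vertices stay connected through `r`.
-/

namespace SimpleGraph

variable {V W : Type*} {G : SimpleGraph V}

lemma Reachable.dist_map_le {G' : SimpleGraph W} (φ : G →g G') {u v : V} (h : G.Reachable u v) :
    G'.dist (φ u) (φ v) ≤ G.dist u v := by
  obtain ⟨p, hp⟩ := h.exists_walk_length_eq_dist
  simpa [hp] using G'.dist_le (p.map φ)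

lemma Reachable.exists_adj_dist_add_one {r v : V} (h : G.Reachable r v) (hne : r ≠ v) :
    ∃ u, G.Adj u v ∧ G.dist r u + 1 = G.dist r v := by
  obtain ⟨p, hp⟩ := h.symm.exists_walk_length_eq_dist
  cases p with
  | nil => exact absurd rfl hne
  | cons hadj q =>
    have hq : G.dist r _ ≤ q.length := dist_comm (G := G) ▸ G.dist_le q
    rw [Walk.length_cons, dist_comm] at hp
    exact ⟨_, hadj.symm, by rcases hadj.symm.diff_dist_adj (u := r) with h | h | h <;> omega⟩

lemma connected_induce_of_forall_walk_support_subset {s : Set V} {r : V} (hr : r ∈ s)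
    (h : ∀ x ∈ s, ∃ p : G.Walk r x, ∀ z ∈ p.support, z ∈ s) :
    (G.induce s).Connected := by
  rw [connected_iff_exists_forall_reachable]
  refine ⟨⟨r, hr⟩, fun ⟨x, hx⟩ => ?_⟩
  obtain ⟨p, hp⟩ := h x hx
  exact ⟨p.induce s hp⟩

namespace Walk

variable {r x z : V} {p : G.Walk r x}

lemma dist_add_dist_of_mem_support (hp : p.length = G.dist r x) (hz : z ∈ p.support) :
    G.dist r z + G.dist z x = G.dist r x := by
  classical
  rw [← length_eq_dist_of_subwalk hp (p.isSubwalk_takeUntil hz),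
    ← length_eq_dist_of_subwalk hp (p.isSubwalk_dropUntil hz), ← length_append, take_spec, hp]

lemma eq_of_mem_support_of_dist_le (hp : p.length = G.dist r x) (hz : z ∈ p.support)
    (hle : G.dist r x ≤ G.dist r z) : z = x := by
  classical
  have := dist_add_dist_of_mem_support hp hz
  exact (p.dropUntil z hz).reachable.dist_eq_zero_iff.mp (by omega)

end Walk

lemma Connected.connected_induce_compl_pair_of_geodesics (hc : G.Connected) {r a b : V}
    (hra : r ≠ a) (hrb : r ≠ b)
    (h : ∀ x, x ≠ a → x ≠ b → ∀ p : G.Walk r x, p.length = G.dist r x →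
      a ∉ p.support ∧ b ∉ p.support) :
    (G.induce {a, b}ᶜ).Connected := by
  refine connected_induce_of_forall_walk_support_subset (r := r) (by simp [hra, hrb]) ?_
  intro x hx
  simp only [Set.mem_compl_iff, Set.mem_insert_iff, Set.mem_singleton_iff, not_or] at hx
  obtain ⟨p, hp⟩ := hc.exists_walk_length_eq_dist r x
  obtain ⟨ha, hb⟩ := h x hx.1 hx.2 p hp
  refine ⟨p, fun z hz => ?_⟩
  rintro (rfl | rfl) <;> contradiction

lemma Connected.connected_induce_compl_pair_of_farthest (hc : G.Connected) {r v w : V}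
    (hvw : v ≠ w) (hv : ∀ y, G.dist r y ≤ G.dist r v) (hw : G.dist r w = G.dist r v) :
    (G.induce {v, w}ᶜ).Connected := by
  have hrv : r ≠ v := by
    intro h
    have : G.dist r w = 0 := by rw [hw, h, dist_self]
    exact hvw (h.symm.trans (hc.dist_eq_zero_iff.mp this))
  have hrw : r ≠ w := by
    intro h
    have : G.dist r v = 0 := by rw [← hw, h, dist_self]
    exact hvw ((hc.dist_eq_zero_iff.mp this).symm.trans h)
  refine hc.connected_induce_compl_pair_of_geodesics hrv hrw fun x hxv hxw p hp => ⟨?_, ?_⟩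
  · exact fun hz => hxv (p.eq_of_mem_support_of_dist_le hp hz (hv x)).symm
  · exact fun hz => hxw (p.eq_of_mem_support_of_dist_le hp hz (hw ▸ hv x)).symm

lemma Connected.connected_induce_compl_pair_of_parent (hc : G.Connected) {r u v : V}
    (hv : ∀ y, G.dist r y ≤ G.dist r v) (huv : G.Adj u v) (hu : G.dist r u + 1 = G.dist r v)
    (hru : r ≠ u) (hfar : ∀ w, w ≠ v → G.dist r w = G.dist r v → 2 < G.dist v w) :
    (G.induce {v, u}ᶜ).Connected := by
  have hrv : r ≠ v := by
    rintro rfl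
    simp at hu
  refine hc.connected_induce_compl_pair_of_geodesics hrv hru fun x hxv hxu p hp => ⟨?_, ?_⟩
  · exact fun hz => hxv (p.eq_of_mem_support_of_dist_le hp hz (hv x)).symm
  · intro hz
    -- a geodesic through the parent `u` can only end at a neighbour of `u` farthest from `r`
    have hsplit := p.dist_add_dist_of_mem_support hp hz
    have hux := hc.pos_dist_of_ne hxu.symm
    have hvx : G.dist v x ≤ G.dist v u + G.dist u x := hc.dist_triangle
    have := hv x
    have := hfar x hxv (by omega)
    rw [dist_eq_one_iff_adj.mpr huv.symm] at hvx
    omega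

theorem Connected.exists_dist_le_two_connected_induce_compl_pair [Finite V] (hc : G.Connected)
    (hV : 2 < Nat.card V) :
    ∃ a b, a ≠ b ∧ G.dist a b ≤ 2 ∧ (G.induce {a, b}ᶜ).Connected := by
  obtain ⟨r⟩ := id hc.nonempty
  have : Nonempty V := ⟨r⟩
  obtain ⟨v, hv⟩ := Finite.exists_max (G.dist r)
  by_cases hA : ∃ w, w ≠ v ∧ G.dist r w = G.dist r v ∧ G.dist v w ≤ 2
  · obtain ⟨w, hwv, hw, hvw⟩ := hA
    exact ⟨v, w, hwv.symm, hvw, hc.connected_induce_compl_pair_of_farthest hwv.symm hv hw⟩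
  push Not at hA
  have hD : 2 ≤ G.dist r v := by
    obtain ⟨w, hwr, hwv⟩ := ENat.exists_ne_ne_of_three_le
      (by rw [ENat.card_eq_coe_natCard]; exact_mod_cast hV) r v
    have := hc.pos_dist_of_ne hwr.symm
    have := hv w
    have := hA w hwv
    have : G.dist v w ≤ G.dist v r + G.dist r w := hc.dist_triangle
    rw [dist_comm (u := v) (v := r)] at this
    omega
  obtain ⟨u, huv, hu⟩ :=
    (hc.preconnected r v).exists_adj_dist_add_one (by rintro rfl; simp at hD)
  have hru : r ≠ u := by
    rintro rfl
    rw [dist_self] at hu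
    omega
  refine ⟨v, u, huv.ne.symm, ?_, hc.connected_induce_compl_pair_of_parent hv huv hu hru hA⟩
  rw [dist_comm, dist_eq_one_iff_adj.mpr huv]
  omega

/-- `f` pairs off the vertices other than `x`, each with a vertex at distance at most `d`. -/
def IsNearPairing (G : SimpleGraph V) (d : ℕ) (x : V) (f : V → V) : Prop :=
  ∀ v, v ≠ x → f v ≠ x ∧ f v ≠ v ∧ f (f v) = v ∧ G.dist v (f v) ≤ d

lemma IsNearPairing.exists_of_induce_compl_pair {d : ℕ} {a b : V} (hab : a ≠ b)
    (hd : G.dist a b ≤ d) (hs : (G.induce {a, b}ᶜ).Connected) {x : ↥({a, b}ᶜ : Set V)}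
    {f : ↥({a, b}ᶜ : Set V) → ↥({a, b}ᶜ : Set V)}
    (hf : (G.induce {a, b}ᶜ).IsNearPairing d x f) :
    ∃ f' : V → V, G.IsNearPairing d x f' := by
  classical
  have hxa : (x : V) ≠ a := fun h => x.2 (Or.inl h)
  have hxb : (x : V) ≠ b := fun h => x.2 (Or.inr h)
  refine ⟨fun v => if h : v ∈ ({a, b}ᶜ : Set V) then f ⟨v, h⟩ else if v = a then b else a,
    fun v hvx => ?_⟩
  by_cases hv : v ∈ ({a, b}ᶜ : Set V)
  · obtain ⟨hfx, hfv, hff, hfd⟩ := hf ⟨v, hv⟩ (fun h => hvx (congrArg Subtype.val h))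
    have hdist := (hs.preconnected _ _).dist_map_le (Embedding.induce _).toHom |>.trans hfd
    refine ⟨?_, ?_, ?_, ?_⟩
    · simpa [hv] using fun h => hfx (Subtype.ext h)
    · simpa [hv] using fun h => hfv (Subtype.ext h)
    · simp [hv, hff]
    · simpa [hv] using hdist
  · obtain rfl | rfl : v = a ∨ v = b := by simpa [or_iff_not_imp_left] using hv
    · simp [hab, hab.symm, hxb.symm, hd]
    · simp [hab, hab.symm, hxa.symm, dist_comm, hd]

theorem Connected.exists_isNearPairing_two [Finite V] (hc : G.Connected) (hV : Odd (Nat.card V)) :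
    ∃ x f, G.IsNearPairing 2 x f := by
  obtain ⟨K, hK⟩ := hV
  induction K generalizing V with
  | zero =>
    obtain ⟨x, hx⟩ := Nat.card_eq_one_iff_exists.mp hK
    exact ⟨x, id, fun v hv => (hv (hx v)).elim⟩
  | succ K ih =>
    obtain ⟨a, b, hab, hd, hs⟩ := hc.exists_dist_le_two_connected_induce_compl_pair (by omega)
    have hcard : Nat.card ↥({a, b}ᶜ : Set V) = 2 * K + 1 := by
      rw [Nat.card_coe_set_eq, Set.ncard_compl, Set.ncard_pair hab]
      omega
    obtain ⟨x, f, hf⟩ := ih hs hcard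
    exact ⟨x, hf.exists_of_induce_compl_pair hab hd hs⟩

end SimpleGraph

theorem near_perfect_dist_le_two_pairing_odd_general {V : Type} [Fintype V] (G : SimpleGraph V)
    (K : ℕ) (hcard : Fintype.card V = 2 * K + 1) (hc : G.Connected) :
    ∃ (x : V) (f : V → V),
      ∀ v, v ≠ x → f v ≠ x ∧ f v ≠ v ∧ f (f v) = v ∧ G.dist v (f v) ≤ 2 :=
  hc.exists_isNearPairing_two ⟨K, by rw [Nat.card_eq_fintype_card, hcard]⟩

/-- Every connected graph with `2K+1` vertices (`K ≥ 1`) contains `K` disjoint pairs of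
distinct vertices, covering all but one vertex, each pair at graph distance at most 2
(encoded by a fixed-point-free involution on the complement of one vertex). -/
theorem near_perfect_dist_le_two_pairing_odd {V : Type} [Fintype V] (G : SimpleGraph V)
    (K : ℕ) (hK : 1 ≤ K) (hcard : Fintype.card V = 2 * K + 1) (hc : G.Connected) :
    ∃ (x : V) (f : V → V),
      ∀ v, v ≠ x → f v ≠ x ∧ f v ≠ v ∧ f (f v) = v ∧ G.dist v (f v) ≤ 2 :=
  near_perfect_dist_le_two_pairing_odd_general G K hcard hc
end

section
/- For any connected finite simple graph G^o with N vertices and any integer K with ⌈N/2⌉ ≤ K ≤ N−1, there exists a connected graph G with K vertices and a set S of N−K disjoint vertex pairs of G^o, each pair at graph distance at most 2, such that contracting the pairs of S in G^o yields G. -/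
/-!
A connected graph on at least two vertices has a pair of vertices at distance at most `2`
whose removal leaves it connected. Removing such pairs one after another yields any number
`m ≤ N / 2` of disjoint pairs, and contracting them is a surjection onto `N - m` vertices;
the image of a connected graph under a surjection is connected.
-/

open Function

namespace SimpleGraph

variable {V W W' : Type*} {G : SimpleGraph V}

theorem Reachable.exists_adj_dist_add_one_eq {r y : V} (h : G.Reachable r y) (hy : y ≠ r) :
    ∃ z, G.Adj z y ∧ G.dist r z + 1 = G.dist r y := by
  obtain ⟨p, hp⟩ := h.exists_walk_length_eq_dist
  have hnil : ¬p.Nil := fun hn => hy hn.eq.symm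
  have hadj := p.adj_penultimate hnil
  refine ⟨p.penultimate, hadj, le_antisymm ?_ ?_⟩
  · have := dist_le p.dropLast
    have := Walk.length_dropLast_add_one hnil
    omega
  · have := hadj.reachable.dist_triangle_right r
    rwa [dist_eq_one_iff_adj.mpr hadj] at this

theorem Reachable.dist_map_le_s5 {H : SimpleGraph W} (f : G →g H) {a b : V} (h : G.Reachable a b) :
    H.dist (f a) (f b) ≤ G.dist a b := by
  obtain ⟨p, hp⟩ := h.exists_walk_length_eq_dist
  simpa [hp] using dist_le (p.map f)

theorem induce_preconnected_of_exists_adj_dist_lt {s : Set V} (r : V)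
    (h : ∀ y ∈ s, y ≠ r → ∃ z ∈ s, G.Adj z y ∧ G.dist r z < G.dist r y) :
    (G.induce s).Preconnected := by
  have reach : ∀ y (hy : y ∈ s), ∃ hr : r ∈ s, (G.induce s).Reachable ⟨r, hr⟩ ⟨y, hy⟩ := by
    intro y
    induction hn : G.dist r y using Nat.strong_induction_on generalizing y with
    | _ n ih =>
      intro hy
      by_cases hyr : y = r
      · subst hyr
        exact ⟨hy, .rfl⟩
      obtain ⟨z, hz, hzy, hlt⟩ := h y hy hyr
      obtain ⟨hr, hrz⟩ := ih _ (hn ▸ hlt) z rfl hz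
      exact ⟨hr, hrz.trans (Adj.reachable (by simpa using hzy))⟩
  intro a b
  obtain ⟨_, ha⟩ := reach a a.2
  obtain ⟨_, hb⟩ := reach b b.2
  exact ha.symm.trans hb

/-- Take `u` farthest from a root `r` and its parent `w`. If `w` has another child `x` as far
from `r` as `u`, remove `{u, x}`; otherwise remove `{u, w}`. Either way every remaining vertex
keeps its parent, so it can still descend to `r`. -/
theorem Preconnected.exists_pair_dist_le_two_induce_compl_preconnected [Finite V] [Nontrivial V]
    (hG : G.Preconnected) :
    ∃ u v, u ≠ v ∧ G.dist u v ≤ 2 ∧ (G.induce {u, v}ᶜ).Preconnected := by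
  obtain ⟨r⟩ : Nonempty V := inferInstance
  obtain ⟨u, hu⟩ := Finite.exists_max (G.dist r)
  obtain ⟨y₀, hy₀⟩ := exists_ne r
  have hur : u ≠ r := by
    have := (hG r y₀).pos_dist_of_ne hy₀.symm
    rintro rfl
    have := hu y₀
    rw [dist_self] at this
    omega
  have parent : ∀ y, y ≠ r → ∃ z, G.Adj z y ∧ G.dist r z + 1 = G.dist r y :=
    fun y hy => (hG r y).exists_adj_dist_add_one_eq hy
  obtain ⟨w, hwu, hw⟩ := parent u hur
  by_cases! hsib : ∃ x, x ≠ u ∧ G.Adj w x ∧ G.dist r x = G.dist r u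
  · obtain ⟨x, hxu, hwx, hx⟩ := hsib
    refine ⟨u, x, hxu.symm, ?_, induce_preconnected_of_exists_adj_dist_lt r ?_⟩
    · simpa using dist_le ((Walk.nil.cons hwx).cons hwu.symm)
    · intro y hy hyr
      obtain ⟨z, hzy, hz⟩ := parent y hyr
      have := hu y
      refine ⟨z, ?_, hzy, by omega⟩
      simp only [Set.mem_compl_iff, Set.mem_insert_iff, Set.mem_singleton_iff, not_or]
      constructor <;> rintro rfl <;> omega
  · refine ⟨u, w, hwu.ne.symm, by rw [dist_comm, dist_eq_one_iff_adj.mpr hwu]; omega,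
      induce_preconnected_of_exists_adj_dist_lt r ?_⟩
    intro y hy hyr
    simp only [Set.mem_compl_iff, Set.mem_insert_iff, Set.mem_singleton_iff, not_or] at hy
    obtain ⟨z, hzy, hz⟩ := parent y hyr
    have := hu y
    refine ⟨z, ?_, hzy, by omega⟩
    simp only [Set.mem_compl_iff, Set.mem_insert_iff, Set.mem_singleton_iff, not_or]
    constructor <;> rintro rfl
    · omega
    · exact hsib y hy.1 hzy (by omega)

/-- The fibres of `p` are the contracted pairs and the untouched vertices. -/
structure IsPairContraction (G : SimpleGraph V) (p : V → W) : Prop where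
  surjective : Surjective p
  fiber_card_le_two : ∀ u v w, p u = p v → p v = p w → u = v ∨ v = w ∨ u = w
  dist_le_two : ∀ u v, p u = p v → u ≠ v → G.dist u v ≤ 2

theorem isPairContraction_equiv (e : V ≃ W) : G.IsPairContraction e :=
  ⟨e.surjective, fun _ _ _ h _ => .inl (e.injective h), fun _ _ h hne => absurd (e.injective h) hne⟩

theorem IsPairContraction.equiv_comp {p : V → W} (hp : G.IsPairContraction p) (e : W ≃ W') :
    G.IsPairContraction (e ∘ p) :=
  ⟨e.surjective.comp hp.surjective, by simpa using hp.fiber_card_le_two,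
    by simpa using hp.dist_le_two⟩

theorem IsPairContraction.extend_of_compl_eq_pair {s : Set V} [DecidablePred (· ∈ s)] {u v : V}
    (hs : sᶜ = {u, v}) (huv : G.dist u v ≤ 2) (hconn : (G.induce s).Preconnected)
    {p : s → W} (hp : (G.induce s).IsPairContraction p) :
    G.IsPairContraction fun x => if hx : x ∈ s then some (p ⟨x, hx⟩) else none := by
  have not_mem : ∀ x, x ∉ s ↔ x = u ∨ x = v := fun x => by
    rw [← Set.mem_compl_iff, hs, Set.mem_insert_iff, Set.mem_singleton_iff]
  have fiber : ∀ a b, ((if ha : a ∈ s then some (p ⟨a, ha⟩) else none) =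
      if hb : b ∈ s then some (p ⟨b, hb⟩) else none) ↔
      (a ∉ s ∧ b ∉ s) ∨ ∃ (ha : a ∈ s) (hb : b ∈ s), p ⟨a, ha⟩ = p ⟨b, hb⟩ := by
    intro a b
    by_cases ha : a ∈ s <;> by_cases hb : b ∈ s <;> simp [ha, hb]
  refine ⟨?_, ?_, ?_⟩
  · rintro (_ | w)
    · exact ⟨u, by simp [(not_mem u).mpr (.inl rfl)]⟩
    · obtain ⟨⟨x, hx⟩, rfl⟩ := hp.surjective w
      exact ⟨x, by simp [hx]⟩
  · intro a b c hab hbc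
    rcases (fiber a b).mp hab with ⟨ha, hb⟩ | ⟨ha, hb, hab⟩ <;>
      rcases (fiber b c).mp hbc with ⟨hb', hc⟩ | ⟨hb', hc, hbc⟩
    · rw [not_mem] at ha hb hc
      grind
    · exact absurd hb' hb
    · exact absurd hb hb'
    · simpa using hp.fiber_card_le_two _ _ _ hab hbc
  · intro a b hab hne
    rcases (fiber a b).mp hab with ⟨ha, hb⟩ | ⟨ha, hb, hab⟩
    · rw [not_mem] at ha hb
      rcases ha with rfl | rfl <;> rcases hb with rfl | rfl <;>
        simp_all [dist_comm]
    · calc G.dist a b ≤ (G.induce s).dist ⟨a, ha⟩ ⟨b, hb⟩ :=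
            (hconn ⟨a, ha⟩ ⟨b, hb⟩).dist_map_le_s5 (Embedding.induce s).toHom
        _ ≤ 2 := hp.dist_le_two _ _ hab (by simpa using hne)

theorem Preconnected.exists_isPairContraction [Fintype V] [Fintype W] (hG : G.Preconnected)
    (m : ℕ) (hW : Fintype.card W + m = Fintype.card V) (hm : 2 * m ≤ Fintype.card V) :
    ∃ p : V → W, G.IsPairContraction p := by
  induction m generalizing V W with
  | zero => exact ⟨_, isPairContraction_equiv (Fintype.equivOfCardEq hW).symm⟩
  | succ m ih =>
    classical
    have : Nontrivial V := Fintype.one_lt_card_iff_nontrivial.mp (by omega)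
    obtain ⟨u, v, huv, hdist, hconn⟩ :=
      hG.exists_pair_dist_le_two_induce_compl_preconnected
    have hcard : Fintype.card ↥({u, v}ᶜ : Set V) = Fintype.card V - 2 := by
      rw [Fintype.card_compl_set]
      simp [huv]
    obtain ⟨w⟩ : Nonempty W := Fintype.card_pos_iff.mp (by omega)
    have hcard' := Fintype.card_congr (Equiv.optionSubtypeNe w)
    rw [Fintype.card_option] at hcard'
    obtain ⟨p, hp⟩ := ih hconn (W := {x // x ≠ w}) (by omega) (by omega)
    exact ⟨_, (hp.extend_of_compl_eq_pair (compl_compl _) hdist hconn).equiv_comp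
      (Equiv.optionSubtypeNe w)⟩

theorem Connected.map_of_surjective {p : V → W} (hG : G.Connected) (hp : Surjective p) :
    (G.map p).Connected := by
  have step {x y : V} (hxy : G.Adj x y) : (G.map p).Reachable (p x) (p y) := by
    by_cases h : p x = p y
    · rw [h]
    · exact Adj.reachable ⟨h, x, y, hxy, rfl, rfl⟩
  have : Nonempty W := hG.nonempty.map p
  refine .mk (hp.forall₂.mpr fun a b => ?_)
  obtain ⟨w⟩ := hG.preconnected a b
  induction w with
  | nil => rfl
  | cons hxy _ ih => exact (step hxy).trans ih

end SimpleGraph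

/-- Expressivity: for any connected graph `G` with `N` vertices and any
`K ∈ [⌈N/2⌉, N-1]`, there is a connected graph `G'` with `K` vertices obtained from `G` by
contracting `N - K` disjoint vertex pairs, each pair at graph distance at most 2. -/
theorem exists_contraction_to_K_vertices {V : Type} [Fintype V] (G : SimpleGraph V)
    (hc : G.Connected) (K : ℕ) (h1 : (Fintype.card V + 1) / 2 ≤ K)
    (h2 : K ≤ Fintype.card V - 1) :
    ∃ (G' : SimpleGraph (Fin K)) (p : V → Fin K),
      G'.Connected ∧ Function.Surjective p ∧
      (∀ u v w : V, p u = p v → p v = p w → u = v ∨ v = w ∨ u = w) ∧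
      (∀ u v : V, p u = p v → u ≠ v → G.dist u v ≤ 2) ∧
      (∀ a b : Fin K, G'.Adj a b ↔ a ≠ b ∧ ∃ u v, G.Adj u v ∧ p u = a ∧ p v = b) := by
  obtain ⟨p, hp⟩ := hc.preconnected.exists_isPairContraction (W := Fin K)
    (Fintype.card V - K) (by simp; omega) (by omega)
  exact ⟨G.map p, p, hc.map_of_surjective hp.surjective, hp.surjective, hp.fiber_card_le_two,
    hp.dist_le_two, fun _ _ => Iff.rfl⟩
end

section
/- Suppose a graph G^o is obtained from a graph G by replacing each vertex v in a subset I_u ⊆ V(G) with two children vertices, such that: (a) for each v in I_u, either the two children are adjacent or there exists a neighbor u of v in G such that both children are adjacent to some vertex arising from u; and (b) for every edge {i, j} of G, at least one vertex arising from i is adjacent to at least one vertex arising from j. If G is connected, then G^o is connected. -/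
/-!
Each fibre of `π` is connected in `Go`: a fibre off `Iu` is a single vertex, and the two
children of a split vertex are adjacent or share a neighbour. Since every edge of `G` lifts
to an edge between the corresponding fibres, a walk in `G` lifts to a walk in `Go` hopping
from fibre to fibre.
-/

namespace SimpleGraph

variable {V W : Type*} {G : SimpleGraph V} {H : SimpleGraph W} {π : W → V}

theorem Reachable.lift_of_fibers (hfiber : ∀ a b, π a = π b → H.Reachable a b)
    (hedge : ∀ i j, G.Adj i j → ∃ a b, π a = i ∧ π b = j ∧ H.Adj a b)
    {i j : V} (hij : G.Reachable i j) {a b : W} (ha : π a = i) (hb : π b = j) :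
    H.Reachable a b := by
  obtain ⟨p⟩ := hij
  induction p generalizing a with
  | nil => exact hfiber a b (ha.trans hb.symm)
  | cons hiu _ ih =>
    obtain ⟨c, d, hc, hd, hcd⟩ := hedge _ _ hiu
    exact (hfiber a c (ha.trans hc.symm)).trans (hcd.reachable.trans (ih hd hb))

theorem Connected.of_surjective_of_fibers (hG : G.Connected) (hπ : Function.Surjective π)
    (hfiber : ∀ a b, π a = π b → H.Reachable a b)
    (hedge : ∀ i j, G.Adj i j → ∃ a b, π a = i ∧ π b = j ∧ H.Adj a b) : H.Connected :=
  have : Nonempty W := hG.nonempty.map fun v => (hπ v).choose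
  ⟨fun a b => (hG.preconnected (π a) (π b)).lift_of_fibers hfiber hedge rfl rfl⟩

end SimpleGraph

/-- Vertex-splitting (unpooling) preserves connectivity: `Go` arises from `G` by splitting
each vertex of `Iu` into two children (parent map `π`); (a) for each split vertex, either
its two children are adjacent or some vertex over a neighbor is adjacent to both children;
(b) each edge of `G` induces at least one edge between the corresponding fibers.  If `G`
is connected, so is `Go`. -/
theorem unpooling_connected {V W : Type} (G : SimpleGraph V) (Go : SimpleGraph W)
    (π : W → V) (Iu : Set V)
    (hfib2 : ∀ v ∈ Iu, ∃ a b : W, a ≠ b ∧ π a = v ∧ π b = v ∧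
      ∀ c, π c = v → c = a ∨ c = b)
    (hfib1 : ∀ v ∉ Iu, ∃! a : W, π a = v)
    (ha : ∀ v ∈ Iu, ∀ a b : W, a ≠ b → π a = v → π b = v →
      Go.Adj a b ∨ ∃ u, G.Adj v u ∧ ∃ c, π c = u ∧ Go.Adj c a ∧ Go.Adj c b)
    (hb : ∀ i j : V, G.Adj i j → ∃ a b : W, π a = i ∧ π b = j ∧ Go.Adj a b)
    (hc : G.Connected) : Go.Connected := by
  have hsurj : Function.Surjective π := fun v => by
    by_cases hv : v ∈ Iu
    · obtain ⟨a, -, -, hav, -⟩ := hfib2 v hv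
      exact ⟨a, hav⟩
    · exact (hfib1 v hv).exists
  have hfiber : ∀ a b, π a = π b → Go.Reachable a b := by
    intro a b hab
    by_cases hne : a = b
    · exact hne ▸ .rfl
    by_cases hv : π a ∈ Iu
    · rcases ha _ hv a b hne rfl hab.symm with hadj | ⟨-, -, c, -, hca, hcb⟩
      · exact hadj.reachable
      · exact hca.reachable.symm.trans hcb.reachable
    · exact absurd ((hfib1 _ hv).unique rfl hab.symm) hne
  exact hc.of_surjective_of_fibers hsurj hfiber hb
end

section
/- Let G^o be a simple graph obtained from a connected graph G by the vertex-splitting construction (each split vertex's two children are connected via an intra-link or via a common designated neighbor, and each original edge induces at least one edge between corresponding vertex groups). Then for any two vertices of G^o whose parent vertices are joined by a path of length n−1 in G, there is a path between them in G^o. -/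
/-!
Every fibre of `π` is connected in `Go`: it is a single vertex, or two children that are
adjacent or share a neighbour. Every edge of `G` lifts to an edge of `Go`. Hence a walk in `G`
lifts edge by edge, moving inside a fibre between consecutive lifted edges.
-/

namespace SimpleGraph

variable {V W : Type*} {G : SimpleGraph V} {H : SimpleGraph W} {π : W → V}

theorem reachable_of_map_eq_of_split (Iu : Set V) (hfib1 : ∀ v ∉ Iu, ∃! a : W, π a = v)
    (hsplit : ∀ v ∈ Iu, ∀ a b : W, a ≠ b → π a = v → π b = v →
      H.Adj a b ∨ ∃ c, H.Adj c a ∧ H.Adj c b)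
    {a b : W} (hab : π a = π b) : H.Reachable a b := by
  by_cases hI : π a ∈ Iu
  · obtain rfl | hne := eq_or_ne a b
    · rfl
    rcases hsplit (π a) hI a b hne rfl hab.symm with hadj | ⟨c, hca, hcb⟩
    · exact hadj.reachable
    · exact hca.reachable.symm.trans hcb.reachable
  · obtain ⟨w, -, huniq⟩ := hfib1 (π a) hI
    rw [huniq a rfl, huniq b hab.symm]

theorem Walk.reachable_of_lift (hfib : ∀ a b, π a = π b → H.Reachable a b)
    (hlift : ∀ i j, G.Adj i j → ∃ a b, π a = i ∧ π b = j ∧ H.Adj a b) :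
    ∀ {u v : V} (_ : G.Walk u v) {a b : W}, π a = u → π b = v → H.Reachable a b
  | _, _, .nil, _, _, hau, hbv => hfib _ _ (hau.trans hbv.symm)
  | _, _, .cons h p, _, _, hau, hbv => by
    obtain ⟨a', b', ha', hb', hadj⟩ := hlift _ _ h
    exact (hfib _ _ (hau.trans ha'.symm)).trans
      (hadj.reachable.trans (reachable_of_lift hfib hlift p hb' hbv))

end SimpleGraph

theorem unpooling_path_lift_general {V W : Type} (G : SimpleGraph V) (Go : SimpleGraph W)
    (π : W → V) (Iu : Set V)
    (hfib1 : ∀ v ∉ Iu, ∃! a : W, π a = v)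
    (ha : ∀ v ∈ Iu, ∀ a b : W, a ≠ b → π a = v → π b = v →
      Go.Adj a b ∨ ∃ u, G.Adj v u ∧ ∃ c, π c = u ∧ Go.Adj c a ∧ Go.Adj c b)
    (hb : ∀ i j : V, G.Adj i j → ∃ a b : W, π a = i ∧ π b = j ∧ Go.Adj a b)
    (x y : W) (n : ℕ) (hpath : ∃ pw : G.Walk (π x) (π y), pw.length = n - 1) :
    Go.Reachable x y := by
  have hfib : ∀ a b, π a = π b → Go.Reachable a b := fun _ _ =>
    SimpleGraph.reachable_of_map_eq_of_split Iu hfib1 fun v hv a b hne hav hbv =>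
      (ha v hv a b hne hav hbv).imp_right fun ⟨_, _, c, _, hca, hcb⟩ => ⟨c, hca, hcb⟩
  obtain ⟨pw, -⟩ := hpath
  exact pw.reachable_of_lift hfib hb rfl rfl

/-- In the vertex-splitting construction, any two vertices of the output graph whose
parents are joined by a path of length `n - 1` in the input graph are joined by a path in
the output graph. -/
theorem unpooling_path_lift {V W : Type} (G : SimpleGraph V) (Go : SimpleGraph W)
    (π : W → V) (Iu : Set V)
    (hfib2 : ∀ v ∈ Iu, ∃ a b : W, a ≠ b ∧ π a = v ∧ π b = v ∧
      ∀ c, π c = v → c = a ∨ c = b)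
    (hfib1 : ∀ v ∉ Iu, ∃! a : W, π a = v)
    (ha : ∀ v ∈ Iu, ∀ a b : W, a ≠ b → π a = v → π b = v →
      Go.Adj a b ∨ ∃ u, G.Adj v u ∧ ∃ c, π c = u ∧ Go.Adj c a ∧ Go.Adj c b)
    (hb : ∀ i j : V, G.Adj i j → ∃ a b : W, π a = i ∧ π b = j ∧ Go.Adj a b)
    (hconn : G.Connected)
    (x y : W) (n : ℕ) (hpath : ∃ pw : G.Walk (π x) (π y), pw.length = n - 1) :
    Go.Reachable x y :=
  unpooling_path_lift_general G Go π Iu hfib1 ha hb x y n hpath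
end

section
/- For every connected finite simple graph G^o with N ≥ 3 vertices, there exist a connected graph G on 3 vertices and a sequence of ⌈log₂(N/3)⌉ vertex-splitting (unpooling) operations whose composition maps G to G^o. -/
/-!
Unpooling is undone by contracting disjoint pairs of vertices that are adjacent or have a common
neighbour. Such a pair can always be deleted from a connected graph without disconnecting the
rest: take a vertex `a` farthest from a root `r` and its predecessor `b` on a geodesic; if `b` has
a second neighbour `a'` at the same maximal distance delete `{a, a'}`, otherwise delete `{a, b}`.
Deleting `p` such pairs one after the other and contracting each of them yields a connected graph
on `K = M - p` vertices, for any `M / 2 ≤ K ≤ M`, which unpools to the given one. Halving the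
number of vertices, but never below three, reaches three vertices after `⌈log₂ (N / 3)⌉` steps.
-/

/-- `IsUnpooling G G'` : `G'` arises from `G` by one unpooling (vertex-splitting) step,
with parent map `π` and split set `Iu`; edges of `G'` live over loops or edges of `G`,
children pairs are linked directly or via a common neighbor, and each edge of `G` induces
an edge between fibers. -/
def IsUnpooling {α β : Type} (G : SimpleGraph α) (G' : SimpleGraph β) : Prop :=
  ∃ (π : β → α) (Iu : Set α),
    (∀ v ∈ Iu, ∃ a b : β, a ≠ b ∧ π a = v ∧ π b = v ∧ ∀ c, π c = v → c = a ∨ c = b) ∧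
    (∀ v ∉ Iu, ∃! a : β, π a = v) ∧
    (∀ a b : β, G'.Adj a b → π a = π b ∨ G.Adj (π a) (π b)) ∧
    (∀ v ∈ Iu, ∀ a b : β, a ≠ b → π a = v → π b = v →
      G'.Adj a b ∨ ∃ u, G.Adj v u ∧ ∃ c, π c = u ∧ G'.Adj c a ∧ G'.Adj c b) ∧
    (∀ i j : α, G.Adj i j → ∃ a b : β, π a = i ∧ π b = j ∧ G'.Adj a b)

open Function

namespace SimpleGraph

variable {V W : Type} {G : SimpleGraph V}

def AdjOrCommonNeighbor (G : SimpleGraph V) (x y : V) : Prop :=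
  G.Adj x y ∨ ∃ c, G.Adj c x ∧ G.Adj c y

lemma AdjOrCommonNeighbor.symm {x y : V} (h : G.AdjOrCommonNeighbor x y) :
    G.AdjOrCommonNeighbor y x :=
  h.imp Adj.symm fun ⟨c, hx, hy⟩ => ⟨c, hy, hx⟩

lemma AdjOrCommonNeighbor.map {G' : SimpleGraph W} (f : G →g G') {x y : V}
    (h : G.AdjOrCommonNeighbor x y) : G'.AdjOrCommonNeighbor (f x) (f y) :=
  h.imp f.map_adj fun ⟨c, hx, hy⟩ => ⟨f c, f.map_adj hx, f.map_adj hy⟩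

lemma Walk.dist_add_dist_le_of_mem_support [DecidableEq V] {r v y : V} (p : G.Walk r v)
    (hp : p.length = G.dist r v) (hy : y ∈ p.support) :
    G.dist r y + G.dist y v ≤ G.dist r v := by
  have hsplit := congrArg Walk.length (p.take_spec hy)
  rw [Walk.length_append] at hsplit
  have := dist_le (p.takeUntil y hy)
  have := dist_le (p.dropUntil y hy)
  omega

/-- `G.dist r v < G.dist r y + G.dist y v` says that `y` lies on no geodesic from `r` to `v`. -/
lemma Connected.induce_connected_of_lt_dist_add_dist (hG : G.Connected) {s : Set V} {r : V}
    (hr : r ∈ s) (hs : ∀ v ∈ s, ∀ y ∉ s, G.dist r v < G.dist r y + G.dist y v) :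
    (G.induce s).Connected := by
  classical
  refine induce_connected_of_patches r hr fun {v} hv => ?_
  obtain ⟨p, hp⟩ := hG.exists_walk_length_eq_dist r v
  have hsupp : {y | y ∈ p.support} ⊆ s := fun y hy => by
    by_contra hys
    exact (hs v hv y hys).not_ge (p.dist_add_dist_le_of_mem_support hp hy)
  exact ⟨_, hsupp, p.start_mem_support, p.end_mem_support,
    p.connected_induce_support.preconnected _ _⟩

lemma Connected.exists_adj_dist_add_one_eq (hG : G.Connected) {u v : V} (huv : u ≠ v) :
    ∃ w, G.Adj v w ∧ G.dist u w + 1 = G.dist u v := by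
  obtain ⟨q, hq⟩ := hG.exists_walk_length_eq_dist v u
  have hq' : ¬ q.Nil := Walk.not_nil_of_ne huv.symm
  refine ⟨q.snd, q.adj_snd hq', ?_⟩
  have hle : G.dist q.snd u ≤ q.tail.length := dist_le _
  have htail := q.length_tail_add_one hq'
  have htri : G.dist u v ≤ G.dist u q.snd + G.dist q.snd v := hG.dist_triangle
  rw [dist_comm (u := q.snd) (v := v), dist_eq_one_iff_adj.mpr (q.adj_snd hq')] at htri
  rw [dist_comm] at hle hq
  omega

lemma Connected.induce_connected_of_forall_dist_le (hG : G.Connected) {s : Set V} {r : V}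
    (hr : r ∈ s) (hs : ∀ y ∉ s, ∀ x, G.dist r x ≤ G.dist r y) : (G.induce s).Connected :=
  hG.induce_connected_of_lt_dist_add_dist hr fun v hv y hy => by
    have := hG.pos_dist_of_ne (ne_of_mem_of_not_mem hv hy).symm
    have := hs y hy v
    omega

lemma Connected.preconnected_induce_compl_of_sole_farthest_neighbor (hG : G.Connected)
    {r a b : V} (hmax : ∀ x, G.dist r x ≤ G.dist r a) (hb : G.dist r b + 1 = G.dist r a)
    (hsole : ∀ v, v ≠ a → G.Adj b v → G.dist r v ≠ G.dist r a) :
    (G.induce ({a, b}ᶜ : Set V)).Preconnected := by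
  by_cases hrb : r = b
  · -- `{a, b}ᶜ` is empty: another vertex would be a neighbour of `r = b` at maximal distance
    subst hrb
    rw [dist_self, zero_add] at hb
    rintro ⟨v, hv⟩
    simp only [Set.mem_compl_iff, Set.mem_insert_iff, Set.mem_singleton_iff, not_or] at hv
    have := hG.pos_dist_of_ne (Ne.symm hv.2)
    have := hmax v
    exact (hsole v hv.1 (dist_eq_one_iff_adj.mp (by omega)) (by omega)).elim
  have hra : r ≠ a := by rintro rfl; rw [dist_self] at hb; omega
  refine (hG.induce_connected_of_lt_dist_add_dist (r := r) (by simp [hra, hrb]) ?_).preconnected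
  intro v hv y hy
  simp only [Set.mem_compl_iff, Set.mem_insert_iff, Set.mem_singleton_iff, not_or] at hv
  simp only [Set.notMem_compl_iff, Set.mem_insert_iff, Set.mem_singleton_iff] at hy
  have := hmax v
  have := hG.pos_dist_of_ne (Ne.symm hv.1)
  have := hG.pos_dist_of_ne (Ne.symm hv.2)
  rcases hy with rfl | rfl
  · omega
  · by_cases hyv : G.Adj y v
    · have := hsole v hv.1 hyv
      omega
    · have := hG.one_lt_dist_of_ne_of_not_adj (Ne.symm hv.2) hyv
      omega

theorem Connected.exists_adjOrCommonNeighbor_induce_compl_preconnected [Finite V] [Nontrivial V]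
    (hG : G.Connected) :
    ∃ a b, a ≠ b ∧ G.AdjOrCommonNeighbor a b ∧ (G.induce ({a, b}ᶜ : Set V)).Preconnected := by
  obtain ⟨r⟩ := hG.nonempty
  obtain ⟨a, hmax⟩ := Finite.exists_max (G.dist r)
  have hra : r ≠ a := by
    obtain ⟨x, hx⟩ := exists_ne r
    have := hG.pos_dist_of_ne hx.symm
    have := hmax x
    rintro rfl
    rw [dist_self] at this
    omega
  obtain ⟨b, hab, hb⟩ := hG.exists_adj_dist_add_one_eq hra
  by_cases hsib : ∃ a', a' ≠ a ∧ G.Adj b a' ∧ G.dist r a' = G.dist r a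
  · obtain ⟨a', ha'a, hba', ha'⟩ := hsib
    have hra' : r ≠ a' := by
      have := hG.pos_dist_of_ne hra
      rintro rfl
      rw [dist_self] at ha'
      omega
    refine ⟨a, a', ha'a.symm, .inr ⟨b, hab.symm, hba'⟩, Connected.preconnected ?_⟩
    refine hG.induce_connected_of_forall_dist_le (r := r) (by simp [hra, hra']) fun y hy => ?_
    simp only [Set.notMem_compl_iff, Set.mem_insert_iff, Set.mem_singleton_iff] at hy
    rcases hy with rfl | rfl
    exacts [hmax, ha' ▸ hmax]
  push Not at hsib
  exact ⟨a, b, hab.ne, .inl hab,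
    hG.preconnected_induce_compl_of_sole_farthest_neighbor hmax hb hsib⟩

/-- The parent map of an unpooling step, seen from the finer graph `G`. -/
structure IsPairContraction_s8 (G : SimpleGraph V) (π : V → W) : Prop where
  surjective : Surjective π
  eq_or_eq_or_eq : ∀ x y z, π x = π y → π x = π z → x = y ∨ x = z ∨ y = z
  adjOrCommonNeighbor : ∀ x y, x ≠ y → π x = π y → G.AdjOrCommonNeighbor x y

namespace IsPairContraction_s8

lemma comp_equiv {W' : Type} {π : V → W} (hπ : G.IsPairContraction_s8 π) (e : W ≃ W') :
    G.IsPairContraction_s8 (e ∘ π) where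
  surjective := e.surjective.comp hπ.surjective
  eq_or_eq_or_eq x y z hxy hxz := hπ.eq_or_eq_or_eq x y z (e.injective hxy) (e.injective hxz)
  adjOrCommonNeighbor x y hxy h := hπ.adjOrCommonNeighbor x y hxy (e.injective h)

lemma of_equiv (e : V ≃ W) : G.IsPairContraction_s8 e where
  surjective := e.surjective
  eq_or_eq_or_eq _ _ _ hxy _ := Or.inl (e.injective hxy)
  adjOrCommonNeighbor _ _ hxy h := absurd (e.injective h) hxy

lemma extend_pair [DecidableEq V] {a b : V} (hab : a ≠ b) (hnear : G.AdjOrCommonNeighbor a b)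
    {π : ({a, b}ᶜ : Set V) → W} (hπ : (G.induce ({a, b}ᶜ : Set V)).IsPairContraction_s8 π) :
    G.IsPairContraction_s8 fun v => if hv : v ∈ ({a, b}ᶜ : Set V) then some (π ⟨v, hv⟩) else none := by
  have hfib : ∀ x y, (if hx : x ∈ ({a, b}ᶜ : Set V) then some (π ⟨x, hx⟩) else none) =
      (if hy : y ∈ ({a, b}ᶜ : Set V) then some (π ⟨y, hy⟩) else none) →
      (∃ hx hy, π ⟨x, hx⟩ = π ⟨y, hy⟩) ∨ (x = a ∨ x = b) ∧ (y = a ∨ y = b) := by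
    intro x y h
    split_ifs at h with hx hy hy
    · exact .inl ⟨hx, hy, Option.some_injective _ h⟩
    · simp only [Set.notMem_compl_iff, Set.mem_insert_iff, Set.mem_singleton_iff] at hx hy
      exact .inr ⟨hx, hy⟩
  refine ⟨fun w => ?_, fun x y z hxy hxz => ?_, fun x y hxy h => ?_⟩
  · cases w with
    | none => exact ⟨a, by simp⟩
    | some w =>
      obtain ⟨⟨v, hv⟩, rfl⟩ := hπ.surjective w
      exact ⟨v, by simp [hv]⟩
  · rcases hfib x y hxy with ⟨hx, hy, hπxy⟩ | ⟨hx, hy⟩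
    · obtain ⟨_, hz, hπxz⟩ | ⟨hx', -⟩ := hfib x z hxz
      · simpa using hπ.eq_or_eq_or_eq ⟨x, hx⟩ ⟨y, hy⟩ ⟨z, hz⟩ hπxy hπxz
      · exact absurd hx' hx
    · obtain ⟨hx', -⟩ | ⟨-, hz⟩ := hfib x z hxz
      · exact absurd hx hx'
      · rcases hx with rfl | rfl <;> rcases hy with rfl | rfl <;> rcases hz with rfl | rfl <;>
          simp
  · rcases hfib x y h with ⟨hx, hy, hπxy⟩ | ⟨hx, hy⟩
    · exact (hπ.adjOrCommonNeighbor _ _ (by simpa using hxy) hπxy).map (Embedding.induce _).toHom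
    · rcases hx with rfl | rfl <;> rcases hy with rfl | rfl
      exacts [absurd rfl hxy, hnear, hnear.symm, absurd rfl hxy]

theorem isUnpooling_map {π : V → W} (hπ : G.IsPairContraction_s8 π) : IsUnpooling (G.map π) G := by
  refine ⟨π, {w | ∃ x y, x ≠ y ∧ π x = w ∧ π y = w}, ?_, ?_, ?_, ?_, ?_⟩
  · rintro w ⟨x, y, hxy, rfl, hyx⟩
    refine ⟨x, y, hxy, rfl, hyx, fun c hc => ?_⟩
    rcases hπ.eq_or_eq_or_eq x y c hyx.symm hc.symm with h | h | h
    exacts [absurd h hxy, .inl h.symm, .inr h.symm]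
  · intro w hw
    obtain ⟨x, rfl⟩ := hπ.surjective w
    exact ⟨x, rfl, fun y hy => by_contra fun hne => hw ⟨y, x, hne, hy, rfl⟩⟩
  · intro x y h
    by_cases he : π x = π y
    exacts [.inl he, .inr (map_adj_apply' h he)]
  · rintro w - x y hxy rfl hyx
    rcases hπ.adjOrCommonNeighbor x y hxy hyx.symm with h | ⟨c, hcx, hcy⟩
    · exact .inl h
    have hxc : π x ≠ π c := fun hxc => by
      rcases hπ.eq_or_eq_or_eq x y c hyx.symm hxc with h | rfl | rfl
      exacts [hxy h, hcx.ne rfl, hcy.ne rfl]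
    exact .inr ⟨π c, map_adj_apply' hcx.symm hxc, c, rfl, hcx, hcy⟩
  · rintro _ _ ⟨-, x, y, h, rfl, rfl⟩
    exact ⟨x, y, rfl, rfl, h⟩

end IsPairContraction_s8

lemma Reachable.map' (f : V → W) {u v : V} (h : G.Reachable u v) :
    (G.map f).Reachable (f u) (f v) := by
  rw [reachable_iff_reflTransGen] at h ⊢
  refine Relation.ReflTransGen.lift' f (fun x y hxy => ?_) _ _ h
  show Relation.ReflTransGen _ (f x) (f y)
  by_cases he : f x = f y
  · exact he ▸ .refl
  · exact .single (map_adj_apply' hxy he)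

lemma Connected.map' {f : V → W} (hf : Surjective f) (hG : G.Connected) : (G.map f).Connected :=
  have := hG.nonempty.map f
  ⟨hf.forall₂.mpr fun u v => (hG u v).map' f⟩

theorem Preconnected.exists_isPairContraction_s8 [Fintype V] (hG : G.Preconnected) {p : ℕ}
    (hp : 2 * p ≤ Fintype.card V) : ∃ π : V → Fin (Fintype.card V - p), G.IsPairContraction_s8 π := by
  classical
  induction p generalizing V with
  | zero => exact ⟨Fintype.equivFin V, .of_equiv _⟩
  | succ p ih =>
    have : Nontrivial V := Fintype.one_lt_card_iff_nontrivial.mp (by omega)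
    obtain ⟨a, b, hab, hnear, hs⟩ :=
      (Connected.mk hG).exists_adjOrCommonNeighbor_induce_compl_preconnected
    have hcard : Fintype.card ({a, b}ᶜ : Set V) = Fintype.card V - 2 := by
      rw [Fintype.card_compl_set]
      simp [hab]
    obtain ⟨π, hπ⟩ := ih hs (by omega)
    exact ⟨_, (hπ.extend_pair hab hnear).comp_equiv
      (Fintype.equivFinOfCardEq (by simp only [Fintype.card_option, Fintype.card_fin]; omega))⟩

theorem Connected.exists_isUnpooling [Fintype V] (hG : G.Connected) {k : ℕ}
    (hk : Fintype.card V ≤ 2 * k) (hk' : k ≤ Fintype.card V) :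
    ∃ G' : SimpleGraph (Fin k), G'.Connected ∧ IsUnpooling G' G := by
  obtain ⟨π, hπ⟩ := hG.preconnected.exists_isPairContraction_s8 (p := Fintype.card V - k) (by omega)
  have hπ' := hπ.comp_equiv (finCongr (by omega : Fintype.card V - (Fintype.card V - k) = k))
  exact ⟨_, hG.map' hπ'.surjective, hπ'.isUnpooling_map⟩

end SimpleGraph

open SimpleGraph in
-- Packing each graph with its number of vertices lets the chain be extended by a plain `if`.
theorem exists_unpooling_chain (L : ℕ) {m : ℕ} (H : SimpleGraph (Fin m)) (hH : H.Connected)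
    (h3 : 3 ≤ m) (hm : m ≤ 3 * 2 ^ L) :
    ∃ Gs : ℕ → Σ k, SimpleGraph (Fin k), (Gs 0).1 = 3 ∧ (Gs 0).2.Connected ∧
      (∀ i < L, IsUnpooling (Gs i).2 (Gs (i + 1)).2) ∧ Gs L = ⟨m, H⟩ := by
  induction L generalizing m with
  | zero => exact ⟨fun _ => ⟨m, H⟩, by simp at hm; exact le_antisymm hm h3, hH, by simp, rfl⟩
  | succ L ih =>
    obtain ⟨G, hG, hGH⟩ := hH.exists_isUnpooling (k := max 3 ((m + 1) / 2))
      (by simp only [Fintype.card_fin]; omega) (by simp only [Fintype.card_fin]; omega)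
    obtain ⟨Gs, h0, hc0, hsteps, hL⟩ := ih G hG (le_max_left _ _) (by rw [pow_succ] at hm; omega)
    refine ⟨fun i => if i ≤ L then Gs i else ⟨m, H⟩, ?_, ?_, fun i hi => ?_, ?_⟩
    · simpa using h0
    · simpa using hc0
    · rcases Nat.lt_succ_iff_lt_or_eq.mp hi with hi | rfl
      · dsimp only
        rw [if_pos hi.le, if_pos (Nat.succ_le_of_lt hi)]
        exact hsteps i hi
      · dsimp only
        rw [if_pos le_rfl, if_neg (Nat.not_succ_le_self i), hL]
        exact hGH
    · simp

/-- Any connected graph with `N ≥ 3` vertices is obtained from some connected 3-vertex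
graph by a sequence of `⌈log₂(N/3)⌉` unpooling operations. -/
theorem exists_unpooling_sequence {V : Type} [Fintype V] (Go : SimpleGraph V)
    (hc : Go.Connected) (N : ℕ) (hN : Fintype.card V = N) (h3 : 3 ≤ N) :
    ∃ (n : ℕ → ℕ) (Gs : ∀ i : ℕ, SimpleGraph (Fin (n i))),
      n 0 = 3 ∧ (Gs 0).Connected ∧
      (∀ i < Nat.clog 2 ((N + 2) / 3), IsUnpooling (Gs i) (Gs (i + 1))) ∧
      Nonempty (Gs (Nat.clog 2 ((N + 2) / 3)) ≃g Go) := by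
  have hN3 : N ≤ 3 * 2 ^ Nat.clog 2 ((N + 2) / 3) := by
    have := Nat.le_pow_clog (by norm_num : 1 < 2) ((N + 2) / 3)
    omega
  let e := SimpleGraph.Iso.map (Fintype.equivFinOfCardEq hN) Go
  obtain ⟨Gs, h0, hc0, hsteps, hL⟩ :=
    exists_unpooling_chain _ _ (e.connected_iff.mp hc) h3 hN3
  refine ⟨fun i => (Gs i).1, fun i => (Gs i).2, h0, hc0, hsteps, ?_⟩
  show Nonempty ((Gs _).2 ≃g Go)
  rw [hL]
  exact ⟨e.symm⟩
end
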